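/- arXiv:2112.06321 — 4 statements merged into one kernel-verified Lean document; each statement's English description precedes it below -/
import Mathlib

section
/- Let A and B be monic finite Blaschke products of degree n (i.e., rational functions of the form prod_{j=1}^n (z-a_j)/(1-conj(a_j)z) with all a_j in the open unit disk). Then there exists a point lambda on the unit circle such that A(lambda) = B(lambda). -/
/-!
For `‖μ‖ = 1` the Blaschke factor at `conj μ` is `conj μ * w / conj w` with `w = 1 - a μ`, so
`A (conj μ) = conj μ ^ n * P_a(μ) / conj (P_a(μ))` where `P_a(z) = ∏ (1 - a_j z)`. Hence `A` and `B`
agree at `conj μ` as soon as `P_a(μ)` and `P_b(μ)` have the same argument. On the closed disk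
`P_a / P_b` has the holomorphic logarithm `∑ log (1 - a_j z) - ∑ log (1 - b_j z)`, vanishing at `0`;
by the mean value property its imaginary part has average `0` on the unit circle, so it vanishes
at some point `μ` of the circle.
-/

open Complex ComplexConjugate Finset Metric
open Real (circleAverage circleAverage_eq_intervalAverage)

theorem exists_mem_sphere_eq_circleAverage {f : ℂ → ℝ} {c : ℂ} {R : ℝ}
    (hf : ContinuousOn f (sphere c |R|)) : ∃ z ∈ sphere c |R|, f z = circleAverage f c R := by
  have hcont : ContinuousOn (fun θ ↦ f (circleMap c R θ)) (Set.uIcc 0 (2 * Real.pi)) :=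
    hf.comp_continuous (continuous_circleMap c R) (circleMap_mem_sphere' c R) |>.continuousOn
  obtain ⟨θ, -, hθ⟩ := exists_eq_interval_average Real.two_pi_pos.ne hcont
  exact ⟨circleMap c R θ, circleMap_mem_sphere' c R θ, by rw [hθ, circleAverage_eq_intervalAverage]⟩

theorem one_sub_mul_mem_slitPlane {a z : ℂ} (ha : ‖a‖ < 1) (hz : ‖z‖ ≤ 1) :
    1 - a * z ∈ slitPlane := by
  rw [sub_eq_add_neg]
  refine mem_slitPlane_of_norm_lt_one ?_
  rw [norm_neg, norm_mul]
  exact mul_lt_one_of_nonneg_of_lt_one_left (norm_nonneg a) ha hz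

section LogProd

variable {ι : Type*} [Fintype ι] {a b : ι → ℂ}

noncomputable def logProdOneSubMul (a : ι → ℂ) (z : ℂ) : ℂ := ∑ j, log (1 - a j * z)

theorem exp_logProdOneSubMul (ha : ∀ j, ‖a j‖ < 1) {z : ℂ} (hz : ‖z‖ ≤ 1) :
    exp (logProdOneSubMul a z) = ∏ j, (1 - a j * z) := by
  rw [logProdOneSubMul, Complex.exp_sum]
  exact prod_congr rfl fun j _ ↦ exp_log (slitPlane_ne_zero (one_sub_mul_mem_slitPlane (ha j) hz))

theorem differentiableAt_logProdOneSubMul (ha : ∀ j, ‖a j‖ < 1) {z : ℂ} (hz : ‖z‖ ≤ 1) :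
    DifferentiableAt ℂ (logProdOneSubMul a) z := by
  unfold logProdOneSubMul
  fun_prop (disch := exact one_sub_mul_mem_slitPlane (ha _) hz)

theorem diffContOnCl_logProdOneSubMul (ha : ∀ j, ‖a j‖ < 1) :
    DiffContOnCl ℂ (logProdOneSubMul a) (ball 0 1) := by
  refine DifferentiableOn.diffContOnCl fun z hz ↦ ?_
  rw [closure_ball 0 one_ne_zero, mem_closedBall_zero_iff] at hz
  exact (differentiableAt_logProdOneSubMul ha hz).differentiableWithinAt

theorem exists_mem_sphere_im_logProdOneSubMul_eq (ha : ∀ j, ‖a j‖ < 1) (hb : ∀ j, ‖b j‖ < 1) :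
    ∃ μ ∈ sphere (0 : ℂ) 1, (logProdOneSubMul a μ).im = (logProdOneSubMul b μ).im := by
  set f := logProdOneSubMul a - logProdOneSubMul b
  have hf : DiffContOnCl ℂ f (ball 0 |1|) := by
    rw [abs_one]
    exact (diffContOnCl_logProdOneSubMul ha).sub (diffContOnCl_logProdOneSubMul hb)
  have hf_sphere : ContinuousOn f (sphere 0 |1|) := by
    refine hf.continuousOn.mono ?_
    rw [closure_ball 0 (by norm_num)]
    exact sphere_subset_closedBall
  have havg : circleAverage (imCLM ∘ f) 0 1 = 0 := by
    rw [imCLM.circleAverage_comp_comm hf_sphere.circleIntegrable', hf.circleAverage]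
    simp [f, logProdOneSubMul]
  obtain ⟨μ, hμ, hμf⟩ :=
    exists_mem_sphere_eq_circleAverage (imCLM.continuous.comp_continuousOn hf_sphere)
  refine ⟨μ, by simpa using hμ, sub_eq_zero.1 ?_⟩
  rw [havg] at hμf
  simpa [f] using hμf

end LogProd

theorem exp_div_conj_exp (s : ℂ) : exp s / conj (exp s) = exp (2 * s.im * I) := by
  rw [← exp_conj, ← Complex.exp_sub, sub_conj, ofReal_mul, ofReal_ofNat]

theorem blaschke_conj_eq_pow_mul_div_conj {ι : Type*} [Fintype ι] (c : ι → ℂ) {μ : ℂ}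
    (hμ : ‖μ‖ = 1) :
    ∏ j, (conj μ - c j) / (1 - conj (c j) * conj μ) =
      conj μ ^ Fintype.card ι * ((∏ j, (1 - c j * μ)) / conj (∏ j, (1 - c j * μ))) := by
  have hμμ : conj μ * μ = 1 := by
    rw [mul_comm, mul_conj, normSq_eq_norm_sq, hμ]; norm_num
  rw [map_prod, ← prod_div_distrib, ← card_univ, ← prod_const, ← prod_mul_distrib]
  refine prod_congr rfl fun j _ ↦ ?_
  rw [map_sub, map_one, map_mul, mul_div_assoc']
  congr 1
  linear_combination (c j) * hμμ

/-- If `A` and `B` are monic Blaschke products of degree `n` (with zeros `a j`, `b j`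
in the open unit disk), then there exists `lam` on the unit circle with `A lam = B lam`. -/
theorem stmt_0 (n : ℕ) (a b : Fin n → ℂ)
    (ha : ∀ j, ‖a j‖ < 1) (hb : ∀ j, ‖b j‖ < 1) :
    ∃ lam : ℂ, ‖lam‖ = 1 ∧
      (∏ j, (lam - a j) / (1 - (starRingEnd ℂ) (a j) * lam)) =
      (∏ j, (lam - b j) / (1 - (starRingEnd ℂ) (b j) * lam)) := by
  obtain ⟨μ, hμ_mem, him⟩ := exists_mem_sphere_im_logProdOneSubMul_eq ha hb
  have hμ : ‖μ‖ = 1 := mem_sphere_zero_iff_norm.1 hμ_mem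
  refine ⟨conj μ, by rwa [norm_conj], ?_⟩
  rw [blaschke_conj_eq_pow_mul_div_conj a hμ, blaschke_conj_eq_pow_mul_div_conj b hμ,
    ← exp_logProdOneSubMul ha hμ.le, ← exp_logProdOneSubMul hb hμ.le, exp_div_conj_exp,
    exp_div_conj_exp, him]
end

section
/- Let B(z) = ((z)/(1)) * ((z - t)/(1 - t z)) be the degree-2 Blaschke product with zeros 0 and t in (0,1), and let r in (0,1) satisfy sqrt(r) < (1 - sqrt(1 - t^2))/t. Then for every z in the level set {|B(z)| < r}, one has rho(z, 0) ≠ rho(z, t), where rho is the pseudohyperbolic distance. -/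
open Complex

/-!
Since `(1 - √(1 - t²)) / t` is the smaller root of `t s² - 2 s + t`, every `s` below it has
`2 s < t (1 + s²)`. If `‖z‖ = ρ(z, t) = s`, then `|B(z)| = s²`, so `s < √r` lies below that root;
in particular `s ≠ 1` because `t < 1`. Expanding `‖z - t‖ = s ‖1 - t z‖` gives
`t (1 - s²) (t (1 + s²) - 2 Re z) = 0`, hence `t (1 + s²) = 2 Re z ≤ 2 s`, a contradiction.
-/

lemma two_mul_lt_mul_one_add_sq {t s : ℝ} (ht0 : 0 < t) (ht1 : t ≤ 1)
    (hs : s < (1 - √(1 - t ^ 2)) / t) : 2 * s < t * (1 + s ^ 2) := by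
  rw [lt_div_iff₀ ht0] at hs
  have hu : √(1 - t ^ 2) ^ 2 = 1 - t ^ 2 := Real.sq_sqrt (by nlinarith)
  have hu0 : 0 ≤ √(1 - t ^ 2) := Real.sqrt_nonneg _
  -- `t (t s² - 2 s + t) = (1 - t s)² - √(1 - t²)²`, and `1 - t s > √(1 - t²) ≥ 0`
  have hpos : 0 < t * (t * (1 + s ^ 2) - 2 * s) := by nlinarith
  nlinarith [(mul_pos_iff_of_pos_left ht0).mp hpos]

lemma mul_one_add_sq_eq_two_mul_re {t : ℝ} (ht : t ≠ 0) {z : ℂ} (hz : ‖z‖ ≠ 1)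
    (h : ‖z‖ = ‖(z - t) / (1 - t * z)‖) : t * (1 + ‖z‖ ^ 2) = 2 * z.re := by
  have hden : (1 : ℂ) - t * z ≠ 0 := by
    intro h0
    rw [h0, div_zero, norm_zero, norm_eq_zero] at h
    simp [h] at h0
  have hnum : ‖z - t‖ ^ 2 = ‖z‖ ^ 2 * ‖1 - t * z‖ ^ 2 := by
    rw [h, norm_div, div_pow, div_mul_cancel₀ _ (by positivity)]
  have hs : 1 - ‖z‖ ^ 2 ≠ 0 := by
    intro h1
    apply hz
    nlinarith [norm_nonneg z]
  simp only [Complex.sq_norm, normSq_apply, sub_re, sub_im, mul_re, mul_im, ofReal_re, ofReal_im,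
    one_re, one_im] at hnum hs ⊢
  have hfactor : t * (1 - (z.re * z.re + z.im * z.im)) *
      (t * (1 + (z.re * z.re + z.im * z.im)) - 2 * z.re) = 0 := by
    linear_combination hnum
  simpa [ht, hs, sub_eq_zero] using hfactor

theorem stmt_11_general (t r : ℝ) (ht0 : 0 < t) (ht1 : t < 1)
    (hsep : Real.sqrt r < (1 - Real.sqrt (1 - t ^ 2)) / t)
    (z : ℂ) (hz : ‖z * ((z - (t : ℂ)) / (1 - (t : ℂ) * z))‖ < r) :
    ‖z‖ ≠ ‖(z - (t : ℂ)) / (1 - (t : ℂ) * z)‖ := by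
  intro h
  rw [norm_mul, ← h, ← sq] at hz
  have hs : ‖z‖ < (1 - √(1 - t ^ 2)) / t :=
    ((Real.lt_sqrt (norm_nonneg z)).mpr hz).trans hsep
  have hlt := two_mul_lt_mul_one_add_sq ht0 ht1.le hs
  have hz1 : ‖z‖ ≠ 1 := by
    rintro h1
    rw [h1] at hlt
    linarith
  have hre := mul_one_add_sq_eq_two_mul_re ht0.ne' hz1 h
  linarith [re_le_norm z]

/-- For `B z = z (z - t)/(1 - t z)` with `t ∈ (0,1)` and `r ∈ (0,1)` with
`√r < (1 - √(1-t²))/t`, every `z` in the level set `{|B| < r}` satisfies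
`ρ(z,0) ≠ ρ(z,t)`. -/
theorem stmt_11 (t r : ℝ) (ht0 : 0 < t) (ht1 : t < 1) (hr0 : 0 < r) (hr1 : r < 1)
    (hsep : Real.sqrt r < (1 - Real.sqrt (1 - t ^ 2)) / t)
    (z : ℂ) (hz : ‖z * ((z - (t : ℂ)) / (1 - (t : ℂ) * z))‖ < r) :
    ‖z‖ ≠ ‖(z - (t : ℂ)) / (1 - (t : ℂ) * z)‖ :=
  stmt_11_general t r ht0 ht1 hsep z hz
end

section
/- For t in [0,1), let X_t be the 3x3 upper triangular matrix [[1,0,0],[0,1/sqrt(2),t/4],[0,0,1/2]]. Then the operator norm product satisfies ||X_t|| * ||X_t^{-1}|| = (1/2) sqrt(12 + t^2 + sqrt(16 + 24 t^2 + t^4)), and this quantity lies in [2, sqrt(13 + sqrt(41))/2]. -/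
/-!
`X_t` acts as the identity on the first coordinate and as the real block `B = [[p, q], [0, r]]`
on the other two. For such a block, `‖B‖² ≤ c` as soon as `c - p² > 0` and
`p²q² ≤ (c - p²)(c - q² - r²)`, i.e. `c - BᵀB` is positive semidefinite; when the determinant
condition is an equality, `(pq, c - p²)` is a vector on which the bound is attained.
For `X_t` itself the first coordinate gives `‖X_t‖ = 1`, while `X_t⁻¹` has a block of the same
shape with `p² = 2`, `q² = t²/2`, `r² = 4`, whose squared norm is the larger root
`(12 + t² + √(16 + 24t² + t⁴))/4` of the characteristic equation of `BᵀB`.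
-/

open Complex

section OpNorm

variable {𝕜 E F : Type*} [RCLike 𝕜] [NormedAddCommGroup E] [NormedSpace 𝕜 E]
  [NormedAddCommGroup F] [NormedSpace 𝕜 F]

lemma ContinuousLinearMap.opNorm_le_sqrt_of_norm_sq_le {T : E →L[𝕜] F} {c : ℝ}
    (h : ∀ x, ‖T x‖ ^ 2 ≤ c * ‖x‖ ^ 2) : ‖T‖ ≤ √c := by
  refine T.opNorm_le_bound (Real.sqrt_nonneg c) fun x => ?_
  rw [← Real.sqrt_sq (norm_nonneg (T x)), ← Real.sqrt_sq (norm_nonneg x),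
    ← Real.sqrt_mul' c (sq_nonneg _)]
  exact Real.sqrt_le_sqrt (h x)

lemma ContinuousLinearMap.sqrt_le_opNorm_of_norm_sq_eq {T : E →L[𝕜] F} {c : ℝ} {v : E}
    (hv : v ≠ 0) (h : ‖T v‖ ^ 2 = c * ‖v‖ ^ 2) : √c ≤ ‖T‖ := by
  have hTv : ‖T v‖ = √c * ‖v‖ := by
    rw [← Real.sqrt_sq (norm_nonneg (T v)), h, Real.sqrt_mul' c (sq_nonneg _),
      Real.sqrt_sq (norm_nonneg v)]
  exact le_of_mul_le_mul_right (hTv ▸ T.le_opNorm v) (norm_pos_iff.2 hv)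

end OpNorm

def triangularBlock (p q r : ℝ) : Matrix (Fin 3) (Fin 3) ℂ :=
  !![1, 0, 0; 0, (p : ℂ), q; 0, 0, r]

lemma triangularBlock_mul (p q r p' q' r' : ℝ) :
    triangularBlock p q r * triangularBlock p' q' r' =
      triangularBlock (p * p') (p * q' + q * r') (r * r') := by
  ext i j
  fin_cases i <;> fin_cases j <;> simp [triangularBlock, Matrix.mul_apply, Fin.sum_univ_three]

lemma triangularBlock_one : triangularBlock 1 0 1 = 1 := by
  ext i j
  fin_cases i <;> fin_cases j <;> simp [triangularBlock]

lemma inv_triangularBlock {p r : ℝ} (hp : p ≠ 0) (hr : r ≠ 0) (q : ℝ) :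
    (triangularBlock p q r)⁻¹ = triangularBlock p⁻¹ (-q / (p * r)) r⁻¹ := by
  refine Matrix.inv_eq_right_inv ?_
  rw [triangularBlock_mul, ← triangularBlock_one]
  congr 1 <;> field_simp
  ring

lemma norm_sq_toEuclideanCLM_triangularBlock_apply (p q r : ℝ) (x : EuclideanSpace ℂ (Fin 3)) :
    ‖Matrix.toEuclideanCLM (𝕜 := ℂ) (triangularBlock p q r) x‖ ^ 2 =
      ‖x 0‖ ^ 2 + ‖(p : ℂ) * x 1 + q * x 2‖ ^ 2 + r ^ 2 * ‖x 2‖ ^ 2 := by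
  simp [EuclideanSpace.norm_sq_eq, Fin.sum_univ_three, triangularBlock, Matrix.mulVec,
    dotProduct, mul_pow]

lemma sq_add_sq_le_of_det_le {p q r c : ℝ} (hp : p ^ 2 < c)
    (hdet : p ^ 2 * q ^ 2 ≤ (c - p ^ 2) * (c - q ^ 2 - r ^ 2)) (a b : ℝ) :
    (p * a + q * b) ^ 2 + r ^ 2 * b ^ 2 ≤ c * (a ^ 2 + b ^ 2) := by
  have key : (c - p ^ 2) * (c * (a ^ 2 + b ^ 2) - ((p * a + q * b) ^ 2 + r ^ 2 * b ^ 2)) =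
      ((c - p ^ 2) * a - p * q * b) ^ 2 +
        ((c - p ^ 2) * (c - q ^ 2 - r ^ 2) - p ^ 2 * q ^ 2) * b ^ 2 := by ring
  have : 0 ≤ (c - p ^ 2) * (c * (a ^ 2 + b ^ 2) - ((p * a + q * b) ^ 2 + r ^ 2 * b ^ 2)) := by
    rw [key]
    have := sub_nonneg.2 hdet
    positivity
  exact sub_nonneg.1 (nonneg_of_mul_nonneg_right this (sub_pos.2 hp))

lemma norm_toEuclideanCLM_triangularBlock_le_sqrt {p q r c : ℝ} (hc : 1 ≤ c) (hp : p ^ 2 < c)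
    (hdet : p ^ 2 * q ^ 2 ≤ (c - p ^ 2) * (c - q ^ 2 - r ^ 2)) :
    ‖Matrix.toEuclideanCLM (𝕜 := ℂ) (triangularBlock p q r)‖ ≤ √c := by
  refine ContinuousLinearMap.opNorm_le_sqrt_of_norm_sq_le fun x => ?_
  have hmid : ‖(p : ℂ) * x 1 + q * x 2‖ ≤ |p| * ‖x 1‖ + |q| * ‖x 2‖ := by
    simpa using norm_add_le ((p : ℂ) * x 1) (q * x 2)
  have h2 := sq_add_sq_le_of_det_le (p := |p|) (q := |q|) (r := r) (by simpa using hp)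
    (by simpa using hdet) ‖x 1‖ ‖x 2‖
  rw [norm_sq_toEuclideanCLM_triangularBlock_apply, EuclideanSpace.norm_sq_eq, Fin.sum_univ_three]
  nlinarith [pow_le_pow_left₀ (norm_nonneg _) hmid 2, sq_nonneg ‖x 0‖]

lemma sqrt_le_norm_toEuclideanCLM_triangularBlock {p q r c : ℝ} (hp : p ^ 2 ≠ c)
    (hdet : p ^ 2 * q ^ 2 = (c - p ^ 2) * (c - q ^ 2 - r ^ 2)) :
    √c ≤ ‖Matrix.toEuclideanCLM (𝕜 := ℂ) (triangularBlock p q r)‖ := by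
  refine ContinuousLinearMap.sqrt_le_opNorm_of_norm_sq_eq
    (v := !₂[0, ((p * q : ℝ) : ℂ), ((c - p ^ 2 : ℝ) : ℂ)]) ?_ ?_
  · intro hv
    have h2 : ((c - p ^ 2 : ℝ) : ℂ) = 0 := congrArg (fun v : EuclideanSpace ℂ (Fin 3) => v 2) hv
    exact hp (sub_eq_zero.1 (ofReal_eq_zero.1 h2)).symm
  · have hmid : (p : ℂ) * ((p * q : ℝ) : ℂ) + q * ((c - p ^ 2 : ℝ) : ℂ) = ((c * q : ℝ) : ℂ) := by
      push_cast; ring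
    rw [norm_sq_toEuclideanCLM_triangularBlock_apply, EuclideanSpace.norm_sq_eq, Fin.sum_univ_three]
    simp only [Matrix.cons_val, hmid, norm_real, Real.norm_eq_abs, sq_abs, norm_zero]
    linear_combination (c - p ^ 2) * hdet

lemma one_le_norm_toEuclideanCLM_triangularBlock (p q r : ℝ) :
    1 ≤ ‖Matrix.toEuclideanCLM (𝕜 := ℂ) (triangularBlock p q r)‖ := by
  simpa using ContinuousLinearMap.sqrt_le_opNorm_of_norm_sq_eq (c := 1)
    (T := Matrix.toEuclideanCLM (𝕜 := ℂ) (triangularBlock p q r)) (v := !₂[1, 0, 0]) (by simp) (by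
      rw [norm_sq_toEuclideanCLM_triangularBlock_apply, EuclideanSpace.norm_sq_eq, Fin.sum_univ_three]
      simp)

lemma norm_toEuclideanCLM_triangularBlock_eq_sqrt {p q r c : ℝ} (hc : 1 ≤ c) (hp : p ^ 2 < c)
    (hdet : p ^ 2 * q ^ 2 = (c - p ^ 2) * (c - q ^ 2 - r ^ 2)) :
    ‖Matrix.toEuclideanCLM (𝕜 := ℂ) (triangularBlock p q r)‖ = √c :=
  le_antisymm (norm_toEuclideanCLM_triangularBlock_le_sqrt hc hp hdet.le)
    (sqrt_le_norm_toEuclideanCLM_triangularBlock hp.ne hdet)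

lemma norm_toEuclideanCLM_triangularBlock_eq_one {p q r : ℝ} (hp : p ^ 2 < 1)
    (hdet : p ^ 2 * q ^ 2 ≤ (1 - p ^ 2) * (1 - q ^ 2 - r ^ 2)) :
    ‖Matrix.toEuclideanCLM (𝕜 := ℂ) (triangularBlock p q r)‖ = 1 := by
  refine le_antisymm ?_ (one_le_norm_toEuclideanCLM_triangularBlock p q r)
  simpa only [Real.sqrt_one] using norm_toEuclideanCLM_triangularBlock_le_sqrt le_rfl hp hdet

lemma norm_toEuclideanCLM_inv_triangularBlock_inv_sqrt_two (t : ℝ) :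
    ‖Matrix.toEuclideanCLM (𝕜 := ℂ) (triangularBlock (1 / √2) (t / 4) (1 / 2))⁻¹‖ =
      1 / 2 * √(12 + t ^ 2 + √(16 + 24 * t ^ 2 + t ^ 4)) := by
  set s := √(16 + 24 * t ^ 2 + t ^ 4)
  have hs_sq : s ^ 2 = 16 + 24 * t ^ 2 + t ^ 4 := Real.sq_sqrt (by positivity)
  have hs_ge : 4 + t ^ 2 ≤ s := Real.le_sqrt_of_sq_le (by nlinarith)
  have h2 : √2 ^ 2 = 2 := Real.sq_sqrt (by norm_num)
  have hp : (1 / √2)⁻¹ ^ 2 = 2 := by rw [one_div, inv_inv, h2]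
  have hq : (-(t / 4) / (1 / √2 * (1 / 2))) ^ 2 = t ^ 2 / 2 := by
    field_simp
    rw [h2]
    ring
  have hr : (1 / 2 : ℝ)⁻¹ ^ 2 = 4 := by norm_num
  rw [inv_triangularBlock (by positivity) (by norm_num),
    norm_toEuclideanCLM_triangularBlock_eq_sqrt (c := (12 + t ^ 2 + s) / 4)]
  · rw [show (12 + t ^ 2 + s) / 4 = (1 / 2) ^ 2 * (12 + t ^ 2 + s) by ring,
      Real.sqrt_mul (by positivity), Real.sqrt_sq (by norm_num)]
  · linarith [sq_nonneg t]
  · rw [hp]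
    linarith [sq_nonneg t]
  · rw [hp, hq, hr]
    linear_combination (-1 / 16) * hs_sq

/-- For `t ∈ [0,1)` and `X_t = [[1,0,0],[0,1/√2,t/4],[0,0,1/2]]`, the product of the
operator norms of `X_t` and `X_t⁻¹` (acting on Euclidean `ℂ³`) equals
`(1/2)√(12 + t² + √(16 + 24t² + t⁴))`, which lies in `[2, √(13 + √41)/2]`. -/
theorem stmt_18 (t : ℝ) (ht : t ∈ Set.Ico (0 : ℝ) 1)
    (X : Matrix (Fin 3) (Fin 3) ℂ)
    (hX : X = !![1, 0, 0; 0, ((1 / Real.sqrt 2 : ℝ) : ℂ), ((t / 4 : ℝ) : ℂ); 0, 0, 1 / 2]) :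
    ‖Matrix.toEuclideanCLM (𝕜 := ℂ) X‖ * ‖Matrix.toEuclideanCLM (𝕜 := ℂ) X⁻¹‖ =
      (1 / 2) * Real.sqrt (12 + t ^ 2 + Real.sqrt (16 + 24 * t ^ 2 + t ^ 4)) ∧
    ‖Matrix.toEuclideanCLM (𝕜 := ℂ) X‖ * ‖Matrix.toEuclideanCLM (𝕜 := ℂ) X⁻¹‖ ∈
      Set.Icc (2 : ℝ) (Real.sqrt (13 + Real.sqrt 41) / 2) := by
  obtain ⟨ht0, ht1⟩ := ht
  have ht2 : t ^ 2 ≤ 1 := by nlinarith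
  have hp : (1 / √2) ^ 2 = 1 / 2 := by rw [div_pow, Real.sq_sqrt (by norm_num), one_pow]
  have hX' : X = triangularBlock (1 / √2) (t / 4) (1 / 2) := by
    rw [hX, triangularBlock]
    norm_num
  rw [hX', norm_toEuclideanCLM_triangularBlock_eq_one (by rw [hp]; norm_num)
    (by rw [hp]; nlinarith), one_mul, norm_toEuclideanCLM_inv_triangularBlock_inv_sqrt_two]
  set s := √(16 + 24 * t ^ 2 + t ^ 4)
  have hs_ge : 4 ≤ s := Real.le_sqrt_of_sq_le (by nlinarith [sq_nonneg t])
  have hs_le : s ≤ √41 := Real.sqrt_le_sqrt (by nlinarith)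
  refine ⟨rfl, ?_, ?_⟩
  · have : 4 ≤ √(12 + t ^ 2 + s) := Real.le_sqrt_of_sq_le (by nlinarith)
    linarith
  · have : √(12 + t ^ 2 + s) ≤ √(13 + √41) := Real.sqrt_le_sqrt (by linarith)
    linarith
end

section
/- Let t in (0,1) and let E be the closed elliptical disk {x + iy : 4x^2/(1+t^2)^2 + 4y^2/(1-t^2)^2 <= 1}, which is the numerical range of the matrix [[t, 1-t^2],[0,-t]]. If t > sqrt(3)/2, then no pseudohyperbolic disk D_rho(z_0, 1/2) with z_0 in the open unit disk is contained in E. -/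
/-!
The pseudohyperbolic disk `D(z₀, ρ)` contains the Euclidean disk with center
`c = (1 - ρ²) z₀ / (1 - ρ²|z₀|²)` and radius `R = ρ (1 - |z₀|²) / (1 - ρ²|z₀|²)`, because
`|z - z₀|² - ρ²|1 - z̄₀ z|² = (1 - ρ²|z₀|²) (|z - c|² - R²)` (the two sets agree except at the pole
`z = 1 / z̄₀`, which lies in the set as written since `x / 0 = 0`).
If `D(z₀, 1/2) ⊆ E`, then, `E` being closed, the closed disk lies in `E` and hence in its bounding
box: `|Re c| + R ≤ (1 + t²)/2` and `|Im c| + R ≤ (1 - t²)/2`. Adding, `|c| + 2R ≤ 1`. But for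
`ρ = 1/2` and `s = |z₀|` one has `|c| + 2R - 1 = (3/4) s (1 - s) / (1 - s²/4)`, positive unless
`z₀ = 0`, and for `z₀ = 0` the disk has radius `1/2 > (1 - t²)/2`.
-/

open Complex ComplexConjugate

noncomputable section

def pseudohyperbolicDisk (z₀ : ℂ) (ρ : ℝ) : Set ℂ :=
  {z | ‖(z - z₀) / (1 - conj z₀ * z)‖ < ρ}

def pseudohyperbolicCenter (z₀ : ℂ) (ρ : ℝ) : ℂ :=
  ((1 - ρ ^ 2) / (1 - ρ ^ 2 * ‖z₀‖ ^ 2) : ℝ) * z₀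

def pseudohyperbolicRadius (z₀ : ℂ) (ρ : ℝ) : ℝ :=
  ρ * (1 - ‖z₀‖ ^ 2) / (1 - ρ ^ 2 * ‖z₀‖ ^ 2)

def ellipse (a b : ℝ) : Set ℂ :=
  {z | (z.re / a) ^ 2 + (z.im / b) ^ 2 ≤ 1}

end

theorem sq_norm_sub_sub_sq_mul_sq_norm_one_sub (z₀ z : ℂ) (ρ : ℝ)
    (h : 1 - ρ ^ 2 * ‖z₀‖ ^ 2 ≠ 0) :
    ‖z - z₀‖ ^ 2 - ρ ^ 2 * ‖1 - conj z₀ * z‖ ^ 2 =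
      (1 - ρ ^ 2 * ‖z₀‖ ^ 2) *
        (‖z - pseudohyperbolicCenter z₀ ρ‖ ^ 2 - pseudohyperbolicRadius z₀ ρ ^ 2) := by
  rw [Complex.sq_norm, normSq_apply, ← sq, ← sq] at h
  simp only [pseudohyperbolicCenter, pseudohyperbolicRadius, Complex.sq_norm, normSq_apply,
    sub_re, sub_im, mul_re, mul_im, one_re, one_im, conj_re, conj_im, ofReal_re, ofReal_im]
  field_simp
  ring

theorem ball_subset_pseudohyperbolicDisk {z₀ : ℂ} {ρ : ℝ} (hρ : 0 ≤ ρ) (hρz₀ : ρ * ‖z₀‖ < 1) :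
    Metric.ball (pseudohyperbolicCenter z₀ ρ) (pseudohyperbolicRadius z₀ ρ) ⊆
      pseudohyperbolicDisk z₀ ρ := by
  intro z hz
  have hpos : 0 < 1 - ρ ^ 2 * ‖z₀‖ ^ 2 := by nlinarith [mul_nonneg hρ (norm_nonneg z₀)]
  have hneg : ‖z - z₀‖ ^ 2 < ρ ^ 2 * ‖1 - conj z₀ * z‖ ^ 2 := by
    have hR : ‖z - pseudohyperbolicCenter z₀ ρ‖ ^ 2 < pseudohyperbolicRadius z₀ ρ ^ 2 := by
      rw [mem_ball_iff_norm] at hz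
      exact pow_lt_pow_left₀ hz (norm_nonneg _) two_ne_zero
    have := sq_norm_sub_sub_sq_mul_sq_norm_one_sub z₀ z ρ hpos.ne'
    nlinarith [mul_neg_of_pos_of_neg hpos (sub_neg.mpr hR)]
  have hlt : ‖z - z₀‖ < ρ * ‖1 - conj z₀ * z‖ := by
    rw [← mul_pow] at hneg
    exact lt_of_pow_lt_pow_left₀ 2 (by positivity) hneg
  have hden : 0 < ‖1 - conj z₀ * z‖ :=
    pos_of_mul_pos_right ((norm_nonneg _).trans_lt hlt) hρ
  show ‖(z - z₀) / (1 - conj z₀ * z)‖ < ρ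
  rwa [norm_div, div_lt_iff₀ hden]

theorem isClosed_ellipse (a b : ℝ) : IsClosed (ellipse a b) :=
  isClosed_le (by fun_prop) continuous_const

theorem abs_le_of_sq_div_le_one {x a : ℝ} (ha : 0 < a) (h : (x / a) ^ 2 ≤ 1) : |x| ≤ a := by
  rwa [sq_le_one_iff_abs_le_one, abs_div, abs_of_pos ha, div_le_one ha] at h

theorem abs_re_le_of_mem_ellipse {a b : ℝ} {z : ℂ} (ha : 0 < a) (hz : z ∈ ellipse a b) :
    |z.re| ≤ a :=
  abs_le_of_sq_div_le_one ha (le_of_add_le_of_nonneg_left hz (sq_nonneg _))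

theorem abs_im_le_of_mem_ellipse {a b : ℝ} {z : ℂ} (hb : 0 < b) (hz : z ∈ ellipse a b) :
    |z.im| ≤ b :=
  abs_le_of_sq_div_le_one hb (le_of_add_le_of_nonneg_right hz (sq_nonneg _))

theorem abs_re_add_le_of_closedBall_subset_ellipse {a b r : ℝ} {c : ℂ} (ha : 0 < a)
    (h : Metric.closedBall c r ⊆ ellipse a b) (hr : 0 ≤ r) :
    |c.re| + r ≤ a := by
  have hplus := abs_re_le_of_mem_ellipse ha
    (h (show c + r ∈ Metric.closedBall c r by simp [abs_of_nonneg hr]))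
  have hminus := abs_re_le_of_mem_ellipse ha
    (h (show c - r ∈ Metric.closedBall c r by simp [abs_of_nonneg hr]))
  simp only [add_re, sub_re, ofReal_re] at hplus hminus
  rw [abs_le] at hplus hminus
  cases abs_cases c.re <;> linarith

theorem abs_im_add_le_of_closedBall_subset_ellipse {a b r : ℝ} {c : ℂ} (hb : 0 < b)
    (h : Metric.closedBall c r ⊆ ellipse a b) (hr : 0 ≤ r) :
    |c.im| + r ≤ b := by
  have hplus := abs_im_le_of_mem_ellipse hb
    (h (show c + r * I ∈ Metric.closedBall c r by simp [abs_of_nonneg hr]))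
  have hminus := abs_im_le_of_mem_ellipse hb
    (h (show c - r * I ∈ Metric.closedBall c r by simp [abs_of_nonneg hr]))
  simp only [add_im, sub_im, mul_im, ofReal_re, ofReal_im, I_re, I_im] at hplus hminus
  rw [abs_le] at hplus hminus
  cases abs_cases c.im <;> linarith

@[simp]
theorem pseudohyperbolicCenter_zero (ρ : ℝ) : pseudohyperbolicCenter 0 ρ = 0 := by
  simp [pseudohyperbolicCenter]

@[simp]
theorem pseudohyperbolicRadius_zero (ρ : ℝ) : pseudohyperbolicRadius 0 ρ = ρ := by
  simp [pseudohyperbolicRadius]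

theorem pseudohyperbolicRadius_pos {z₀ : ℂ} {ρ : ℝ} (hρ : 0 < ρ) (hρ1 : ρ ≤ 1) (hz₀ : ‖z₀‖ < 1) :
    0 < pseudohyperbolicRadius z₀ ρ := by
  have hn : ‖z₀‖ ^ 2 < 1 := by nlinarith [norm_nonneg z₀]
  have : ρ ^ 2 * ‖z₀‖ ^ 2 < 1 := by
    nlinarith [mul_le_mul_of_nonneg_right (pow_le_one₀ (n := 2) hρ.le hρ1) (sq_nonneg ‖z₀‖)]
  unfold pseudohyperbolicRadius
  exact div_pos (mul_pos hρ (by linarith)) (by linarith)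

theorem one_lt_norm_pseudohyperbolicCenter_add_two_mul_radius {z₀ : ℂ} (h0 : z₀ ≠ 0)
    (h1 : ‖z₀‖ < 1) :
    1 < ‖pseudohyperbolicCenter z₀ (1 / 2)‖ + 2 * pseudohyperbolicRadius z₀ (1 / 2) := by
  have hs : 0 < ‖z₀‖ := norm_pos_iff.mpr h0
  have hd : 0 < 1 - (1 / 2) ^ 2 * ‖z₀‖ ^ 2 := by nlinarith
  rw [pseudohyperbolicCenter, pseudohyperbolicRadius, norm_mul, norm_real, Real.norm_eq_abs,
    abs_of_pos (div_pos (by norm_num) hd), div_mul_eq_mul_div, mul_div_assoc', ← add_div,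
    lt_div_iff₀ hd]
  nlinarith

theorem stmt_19_general (t : ℝ) (ht0 : 0 < t) (ht1 : t < 1)
    (z₀ : ℂ) (hz₀ : ‖z₀‖ < 1) :
    ¬ ({z : ℂ | ‖(z - z₀) / (1 - (starRingEnd ℂ) z₀ * z)‖ < 1 / 2} ⊆
      {z : ℂ | 4 * z.re ^ 2 / (1 + t ^ 2) ^ 2 + 4 * z.im ^ 2 / (1 - t ^ 2) ^ 2 ≤ 1}) := by
  intro hsub
  have hE : {z : ℂ | 4 * z.re ^ 2 / (1 + t ^ 2) ^ 2 + 4 * z.im ^ 2 / (1 - t ^ 2) ^ 2 ≤ 1} =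
      ellipse ((1 + t ^ 2) / 2) ((1 - t ^ 2) / 2) := by
    have key (x A : ℝ) : 4 * x ^ 2 / A ^ 2 = (x / (A / 2)) ^ 2 := by ring
    simp only [key]
    rfl
  set c := pseudohyperbolicCenter z₀ (1 / 2)
  set R := pseudohyperbolicRadius z₀ (1 / 2)
  have hR : 0 < R := pseudohyperbolicRadius_pos (by norm_num) (by norm_num) hz₀
  have hball : Metric.closedBall c R ⊆ ellipse ((1 + t ^ 2) / 2) ((1 - t ^ 2) / 2) := by
    rw [← closure_ball c hR.ne', ← (isClosed_ellipse _ _).closure_eq, ← hE]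
    exact closure_mono ((ball_subset_pseudohyperbolicDisk (by norm_num) (by linarith)).trans hsub)
  have hre := abs_re_add_le_of_closedBall_subset_ellipse (by positivity) hball hR.le
  have him := abs_im_add_le_of_closedBall_subset_ellipse (by nlinarith) hball hR.le
  have hz₀ne : z₀ ≠ 0 := by
    rintro rfl
    simp only [c, R, pseudohyperbolicCenter_zero, pseudohyperbolicRadius_zero, zero_im,
      abs_zero, zero_add] at him
    nlinarith
  linarith [one_lt_norm_pseudohyperbolicCenter_add_two_mul_radius hz₀ne hz₀,
    norm_le_abs_re_add_abs_im c]

/-- For `t ∈ (√3/2, 1)`, the elliptical disk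
`E = {x+iy : 4x²/(1+t²)² + 4y²/(1-t²)² ≤ 1}` (the numerical range of
`[[t,1-t²],[0,-t]]`) contains no pseudohyperbolic disk `D_ρ(z₀, 1/2)`. -/
theorem stmt_19 (t : ℝ) (ht0 : 0 < t) (ht1 : t < 1) (ht : Real.sqrt 3 / 2 < t)
    (z₀ : ℂ) (hz₀ : ‖z₀‖ < 1) :
    ¬ ({z : ℂ | ‖(z - z₀) / (1 - (starRingEnd ℂ) z₀ * z)‖ < 1 / 2} ⊆
      {z : ℂ | 4 * z.re ^ 2 / (1 + t ^ 2) ^ 2 + 4 * z.im ^ 2 / (1 - t ^ 2) ^ 2 ≤ 1}) :=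
  stmt_19_general t ht0 ht1 z₀ hz₀
end
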